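/- arXiv:2108.06799 — 2 statements merged into one kernel-verified Lean document; each statement's English description precedes it below -/
import Mathlib

section
/- Inverse mapping of a primitive Pythagorean triple to the partition parameters: if x, y, z are positive integers with x^2 + y^2 = z^2, gcd(x, y) = 1, y even, and l is the positive integer with l^2 = z − y, then 2*l divides x − l^2, and setting S = x − l^2 and t = S / (2*l) one has S = 2*t*l, y = S + 2*t^2 and z = S + 2*t^2 + l^2. -/
/-!
With `z = y + l²` the equation `x² + y² = z²` becomes `x² = l² (2y + l²)`, so `x = l m` with
`m² = 2y + l²`. Then `m ≡ l (mod 2)`, and `t := (m - l) / 2` gives `x = l² + 2lt` and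
`y = 2lt + 2t²`, i.e. `S = x - l² = 2lt`.
-/

namespace Nat

lemma exists_eq_add_two_mul_of_sq_eq_two_mul_add_sq {m l y : ℕ} (h : m ^ 2 = 2 * y + l ^ 2) :
    ∃ k, m = l + 2 * k := by
  have hlm : l ≤ m := (Nat.pow_le_pow_iff_left two_ne_zero).1 (by omega)
  have hparity : Even m ↔ Even l := by
    rw [← Nat.even_pow' (n := 2) two_ne_zero, h, Nat.even_add, iff_true_left (even_two_mul y),
      Nat.even_pow' two_ne_zero]
  obtain ⟨k, hk⟩ := (Nat.even_sub hlm).2 hparity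
  exact ⟨k, by omega⟩

lemma exists_eq_sq_add_two_mul_of_sq_add_sq_eq {x y l : ℕ} (hl : 0 < l)
    (h : x ^ 2 + y ^ 2 = (y + l ^ 2) ^ 2) :
    ∃ t, x = l ^ 2 + 2 * l * t ∧ y = 2 * l * t + 2 * t ^ 2 := by
  have hx : x ^ 2 = l ^ 2 * (2 * y + l ^ 2) := by linear_combination h
  obtain ⟨m, rfl⟩ : l ∣ x := (Nat.pow_dvd_pow_iff two_ne_zero).1 ⟨_, hx⟩
  have hm : m ^ 2 = 2 * y + l ^ 2 :=
    Nat.eq_of_mul_eq_mul_left (by positivity : 0 < l ^ 2) (by rw [← hx]; ring)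
  obtain ⟨t, rfl⟩ := exists_eq_add_two_mul_of_sq_eq_two_mul_add_sq hm
  exact ⟨t, by ring, Nat.eq_of_mul_eq_mul_left two_pos (by linear_combination -hm)⟩

end Nat

theorem stmt_7_general (x y z : ℕ)
    (hpyth : x ^ 2 + y ^ 2 = z ^ 2)
    (l : ℕ) (hl : 0 < l) (hlsq : l ^ 2 = z - y) :
    2 * l ∣ x - l ^ 2 ∧
      (let S := x - l ^ 2
       let t := S / (2 * l)
       S = 2 * t * l ∧ y = S + 2 * t ^ 2 ∧ z = S + 2 * t ^ 2 + l ^ 2) := by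
  have hyz : y ≤ z := (Nat.pow_le_pow_iff_left two_ne_zero).1 (by omega)
  have hz : z = y + l ^ 2 := by omega
  obtain ⟨t, hx, hy⟩ := Nat.exists_eq_sq_add_two_mul_of_sq_add_sq_eq hl (hz ▸ hpyth)
  have hS : x - l ^ 2 = 2 * l * t := by omega
  have ht : 2 * l * t / (2 * l) = t := Nat.mul_div_cancel_left t (by positivity)
  refine ⟨⟨t, hS⟩, ?_⟩
  simp only [hS, ht]
  exact ⟨by ring, by omega, by omega⟩

theorem stmt_7 (x y z : ℕ) (hx : 0 < x) (hy : 0 < y) (hz : 0 < z)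
    (hpyth : x ^ 2 + y ^ 2 = z ^ 2)
    (hgcd : Nat.gcd x y = 1) (hyeven : Even y)
    (l : ℕ) (hl : 0 < l) (hlsq : l ^ 2 = z - y) :
    2 * l ∣ x - l ^ 2 ∧
      (let S := x - l ^ 2
       let t := S / (2 * l)
       S = 2 * t * l ∧ y = S + 2 * t ^ 2 ∧ z = S + 2 * t ^ 2 + l ^ 2) :=
  stmt_7_general x y z hpyth l hl hlsq
end

section
/- Counting the partitions of the side of the generating square: for every even positive integer S, the number of ordered pairs (t, l) of positive integers with S = 2*t*l, l odd and gcd(t, l) = 1 equals 2^j, where j is the number of distinct odd prime divisors of S. -/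
/-!
Write `S = 2 N`. A pair `(t, l)` counted here is `(N / l, l)` for an odd unitary divisor `l` of `N`,
i.e. `l ∣ N` with `gcd l (N / l) = 1`. A unitary divisor `d` of `N` contains the full power of
each of its prime factors, so `d = ∏ p ∈ d.primeFactors, p ^ v_p(N)`, and `d ↦ d.primeFactors` is
a bijection onto the subsets of the prime factors of `N`. Oddness of `d` means `2 ∉ d.primeFactors`,
leaving the `2 ^ j` subsets of the odd prime factors.
-/

open Finset

namespace Nat

def unitaryDivisors (n : ℕ) : Finset ℕ := {d ∈ n.divisors | Coprime d (n / d)}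

theorem mem_unitaryDivisors {n d : ℕ} :
    d ∈ n.unitaryDivisors ↔ d ∣ n ∧ Coprime d (n / d) ∧ n ≠ 0 := by
  simp only [unitaryDivisors, mem_filter, mem_divisors]
  tauto

theorem primeFactors_prod_pow {s : Finset ℕ} {k : ℕ → ℕ} (hs : ∀ p ∈ s, p.Prime)
    (hk : ∀ p ∈ s, k p ≠ 0) : (∏ p ∈ s, p ^ k p).primeFactors = s := by
  have hne : ∏ p ∈ s, p ^ k p ≠ 0 :=
    prod_ne_zero_iff.2 fun p hp ↦ pow_ne_zero _ (hs p hp).ne_zero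
  ext q
  rw [mem_primeFactors_of_ne_zero hne]
  constructor
  · rintro ⟨hq, hdvd⟩
    obtain ⟨p, hp, hqp⟩ := (hq.prime.dvd_finsetProd_iff _).1 hdvd
    rwa [(prime_dvd_prime_iff_eq hq (hs p hp)).1 (hq.dvd_of_dvd_pow hqp)]
  · intro hq
    exact ⟨hs q hq, (dvd_pow_self q (hk q hq)).trans (dvd_prod_of_mem _ hq)⟩

theorem coprime_prod_pow_of_disjoint {s t : Finset ℕ} (hs : ∀ p ∈ s, p.Prime)
    (ht : ∀ p ∈ t, p.Prime) (hst : Disjoint s t) (k l : ℕ → ℕ) :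
    Coprime (∏ p ∈ s, p ^ k p) (∏ q ∈ t, q ^ l q) :=
  Coprime.prod_left fun p hp ↦ Coprime.prod_right fun q hq ↦
    Coprime.pow _ _ <| (coprime_primes (hs p hp) (ht q hq)).2 fun h ↦
      disjoint_left.1 hst hp (h ▸ hq)

theorem prod_ordProj_mem_unitaryDivisors {n : ℕ} {Q : Finset ℕ} (hn : n ≠ 0)
    (hQ : Q ⊆ n.primeFactors) : ∏ p ∈ Q, ordProj[p] n ∈ n.unitaryDivisors := by
  have hprime : ∀ p ∈ n.primeFactors, p.Prime := fun _ ↦ prime_of_mem_primeFactors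
  have hsplit : (∏ p ∈ Q, ordProj[p] n) * ∏ p ∈ n.primeFactors \ Q, ordProj[p] n = n := by
    rw [mul_comm, prod_sdiff hQ, ← prod_primeFactors_pow_factorization hn]
  have hpos : 0 < ∏ p ∈ Q, ordProj[p] n := prod_pos fun p _ ↦ ordProj_pos n p
  refine mem_unitaryDivisors.2 ⟨Dvd.intro _ hsplit, ?_, hn⟩
  rw [Nat.div_eq_of_eq_mul_right hpos hsplit.symm]
  exact coprime_prod_pow_of_disjoint (fun p hp ↦ hprime p (hQ hp))
    (fun p hp ↦ hprime p (sdiff_subset hp)) disjoint_sdiff _ _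

theorem prod_primeFactors_ordProj_of_mem_unitaryDivisors {n d : ℕ}
    (hd : d ∈ n.unitaryDivisors) : ∏ p ∈ d.primeFactors, ordProj[p] n = d := by
  obtain ⟨hdvd, hcop, hn⟩ := mem_unitaryDivisors.1 hd
  have hd0 : d ≠ 0 := ne_zero_of_dvd_ne_zero hn hdvd
  conv_rhs => rw [prod_primeFactors_pow_factorization hd0]
  refine prod_congr rfl fun p hp ↦ ?_
  rw [← Nat.mul_div_cancel' hdvd,
    factorization_eq_of_coprime_left hcop (mem_primeFactors_iff_mem_primeFactorsList.1 hp)]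

theorem primeFactors_prod_ordProj {n : ℕ} {Q : Finset ℕ} (hQ : Q ⊆ n.primeFactors) :
    (∏ p ∈ Q, ordProj[p] n).primeFactors = Q :=
  primeFactors_prod_pow (fun _ hp ↦ prime_of_mem_primeFactors (hQ hp)) fun _ hp ↦
    Finsupp.mem_support_iff.1 (support_factorization n ▸ hQ hp)

theorem card_filter_unitaryDivisors_primeFactors_subset {n : ℕ} {s : Finset ℕ} (hn : n ≠ 0)
    (hs : s ⊆ n.primeFactors) : #{d ∈ n.unitaryDivisors | d.primeFactors ⊆ s} = 2 ^ #s := by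
  rw [← card_powerset]
  refine card_nbij' primeFactors (fun Q ↦ ∏ p ∈ Q, ordProj[p] n) ?_ ?_ ?_ ?_
  · intro d hd
    simpa using (mem_filter.1 hd).2
  · intro Q hQ
    have hQs : Q ⊆ s := mem_powerset.1 hQ
    refine mem_filter.2 ⟨prod_ordProj_mem_unitaryDivisors hn (hQs.trans hs), ?_⟩
    rwa [primeFactors_prod_ordProj (hQs.trans hs)]
  · intro d hd
    exact prod_primeFactors_ordProj_of_mem_unitaryDivisors (mem_filter.1 hd).1
  · intro Q hQ
    exact primeFactors_prod_ordProj ((mem_powerset.1 hQ).trans hs)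

theorem card_odd_unitaryDivisors {n : ℕ} (hn : n ≠ 0) :
    #{d ∈ n.unitaryDivisors | Odd d} = 2 ^ #(n.primeFactors.erase 2) := by
  rw [← card_filter_unitaryDivisors_primeFactors_subset hn (erase_subset _ _)]
  congr 1
  refine filter_congr fun d hd ↦ ?_
  obtain ⟨hdvd, -, -⟩ := mem_unitaryDivisors.1 hd
  rw [subset_erase, and_iff_right (primeFactors_mono hdvd hn), mem_primeFactors,
    ← even_iff_two_dvd, ← not_odd_iff_even]
  have hd0 : d ≠ 0 := ne_zero_of_dvd_ne_zero hn hdvd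
  simp [prime_two, hd0]

theorem ncard_partitions_eq_card_odd_unitaryDivisors (N : ℕ) :
    {p : ℕ × ℕ | 0 < p.1 ∧ 0 < p.2 ∧ 2 * N = 2 * p.1 * p.2 ∧ Odd p.2 ∧ gcd p.1 p.2 = 1}.ncard
      = #{d ∈ N.unitaryDivisors | Odd d} := by
  have hset : {p : ℕ × ℕ | 0 < p.1 ∧ 0 < p.2 ∧ 2 * N = 2 * p.1 * p.2 ∧ Odd p.2 ∧
      gcd p.1 p.2 = 1} = ↑(image (fun d ↦ (N / d, d)) {d ∈ N.unitaryDivisors | Odd d}) := by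
    ext ⟨t, l⟩
    simp only [Set.mem_ofPred_eq, coe_image, Set.mem_image, mem_coe, mem_filter,
      mem_unitaryDivisors, Prod.mk.injEq]
    constructor
    · rintro ⟨ht, hl, hS, hodd, hcop⟩
      have hN : N = t * l := by linarith
      have hdiv : N / l = t := by rw [hN, Nat.mul_div_cancel _ hl]
      refine ⟨l, ⟨⟨Dvd.intro_left t hN.symm, hdiv ▸ Coprime.symm hcop, ?_⟩, hodd⟩, hdiv, rfl⟩
      exact hN ▸ (Nat.mul_pos ht hl).ne'
    · rintro ⟨d, ⟨⟨hdvd, hcop, hN⟩, hodd⟩, rfl, rfl⟩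
      have hd : 0 < d := pos_of_dvd_of_pos hdvd (pos_of_ne_zero hN)
      refine ⟨Nat.div_pos (le_of_dvd (pos_of_ne_zero hN) hdvd) hd, hd, ?_, hodd, hcop.symm⟩
      rw [mul_assoc, Nat.div_mul_cancel hdvd]
  rw [hset, Set.ncard_coe_finset,
    Finset.card_image_of_injective _ fun _ _ h ↦ congrArg Prod.snd h]

end Nat

theorem stmt_14 (S : ℕ) (hS : 0 < S) (hSeven : Even S) :
    {p : ℕ × ℕ | 0 < p.1 ∧ 0 < p.2 ∧ S = 2 * p.1 * p.2 ∧ Odd p.2 ∧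
        Nat.gcd p.1 p.2 = 1}.ncard
      = 2 ^ (S.primeFactors.erase 2).card := by
  obtain ⟨N, rfl⟩ := even_iff_two_dvd.1 hSeven
  have hN : N ≠ 0 := by omega
  rw [Nat.ncard_partitions_eq_card_odd_unitaryDivisors, Nat.card_odd_unitaryDivisors hN,
    Nat.primeFactors_mul two_ne_zero hN, Nat.prime_two.primeFactors, ← insert_eq,
    erase_insert_eq_erase]
end
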